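/- arXiv:0704.1308 — 3 statements merged into one kernel-verified Lean document; each statement's English description precedes it below -/
import Mathlib

section
/- Let X ~ Gamma(M,1) and let X_beta be an independent Beta(M-N+1, N-1) random variable. Then X_beta * X ~ Gamma(M-N+1, 1). -/
open MeasureTheory ProbabilityTheory

/-- The Beta distribution on `[0,1]` with parameters `a`, `b`. -/
noncomputable def betaMeasure (a b : ℝ) : Measure ℝ :=
  (volume.restrict (Set.Ioo (0:ℝ) 1)).withDensity
    (fun x => ENNReal.ofReal (Real.Gamma (a + b) / (Real.Gamma a * Real.Gamma b) *
      x ^ (a - 1) * (1 - x) ^ (b - 1)))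

/-!
Write `a = M - N + 1`, `b = N - 1`. By independence the law of `Xb * X` is the multiplicative
convolution `Beta(a, b) ∗ₘ Gamma(a + b, 1)`. Given the Beta factor `t ∈ (0, 1)`, the variable
`t * X` is `Gamma(a + b, 1 / t)`, so the convolution has density
`y ↦ ∫ gammaPDF (a + b) t⁻¹ y dBeta(a, b)(t)`. The substitution `t = 1 / (1 + u)` turns this
into `y ^ (a + b - 1) e ^ (-y) / (Γ(a) Γ(b)) * ∫₀^∞ u ^ (b - 1) e ^ (-y u) du`, and the last
integral is `Γ(b) / y ^ b`, leaving exactly the `Gamma(a, 1)` density.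
-/

open Real Set
open scoped ENNReal

lemma map_const_mul_volume_withDensity {t : ℝ} (ht : t ≠ 0) (g : ℝ → ℝ≥0∞) :
    (volume.withDensity g).map (t * ·) =
      volume.withDensity (fun y => ENNReal.ofReal |t⁻¹| * g (t⁻¹ * y)) := by
  ext s hs
  have hpre : MeasurableSet ((t * ·) ⁻¹' s) := measurable_const_mul t hs
  have hderiv : ∀ x ∈ (t * ·) ⁻¹' s, HasDerivWithinAt (t * ·) t ((t * ·) ⁻¹' s) x :=
    fun x _ => by simpa using ((hasDerivAt_id x).const_mul t).hasDerivWithinAt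
  calc (volume.withDensity g).map (t * ·) s = ∫⁻ x in (t * ·) ⁻¹' s, g x := by
        rw [Measure.map_apply (measurable_const_mul t) hs, withDensity_apply _ hpre]
    _ = ∫⁻ x in (t * ·) ⁻¹' s,
          ENNReal.ofReal |t| * (ENNReal.ofReal |t⁻¹| * g (t⁻¹ * (t * x))) := by
        refine setLIntegral_congr_fun hpre fun x _ => ?_
        rw [← mul_assoc, ← ENNReal.ofReal_mul (abs_nonneg t), ← abs_mul, mul_inv_cancel₀ ht,
          inv_mul_cancel_left₀ ht, abs_one, ENNReal.ofReal_one, one_mul]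
    _ = ∫⁻ y in (t * ·) '' ((t * ·) ⁻¹' s), ENNReal.ofReal |t⁻¹| * g (t⁻¹ * y) :=
        (lintegral_image_eq_lintegral_abs_deriv_mul hpre hderiv (mul_right_injective₀ ht).injOn
          (fun y => ENNReal.ofReal |t⁻¹| * g (t⁻¹ * y))).symm
    _ = _ := by rw [image_preimage_eq s (mul_left_surjective₀ ht), withDensity_apply _ hs]

lemma ofReal_inv_mul_gammaPDF_inv_mul {a r t : ℝ} (hr : 0 ≤ r) (ht : 0 < t) (y : ℝ) :
    ENNReal.ofReal t⁻¹ * gammaPDF a r (t⁻¹ * y) = gammaPDF a (r / t) y := by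
  rcases lt_or_ge y 0 with hy | hy
  · rw [gammaPDF_of_neg hy, gammaPDF_of_neg (mul_neg_of_pos_of_neg (inv_pos.2 ht) hy), mul_zero]
  have ht' : 0 ≤ t⁻¹ := inv_nonneg.2 ht.le
  rw [gammaPDF_of_nonneg (mul_nonneg ht' hy), gammaPDF_of_nonneg hy,
    ← ENNReal.ofReal_mul ht', div_eq_mul_inv r t, mul_rpow hr ht', mul_rpow ht' hy]
  congr 1
  rw [rpow_sub_one (inv_pos.2 ht).ne']
  field_simp

lemma gammaMeasure_map_const_mul {a r t : ℝ} (hr : 0 ≤ r) (ht : 0 < t) :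
    (gammaMeasure a r).map (t * ·) = gammaMeasure a (r / t) := by
  rw [gammaMeasure, map_const_mul_volume_withDensity ht.ne', abs_of_pos (inv_pos.2 ht)]
  simp_rw [ofReal_inv_mul_gammaPDF_inv_mul hr ht]
  rfl

instance (a r : ℝ) : SFinite (gammaMeasure a r) := by
  rw [gammaMeasure]
  infer_instance

lemma lintegral_rpow_mul_exp_neg_mul_Ioi {b y : ℝ} (hb : 0 < b) (hy : 0 < y) :
    ∫⁻ u in Ioi 0, ENNReal.ofReal (u ^ (b - 1) * exp (-(y * u))) =
      ENNReal.ofReal ((1 / y) ^ b * Gamma b) := by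
  have hint := integral_rpow_mul_exp_neg_mul_Ioi hb hy
  rw [← hint, ofReal_integral_eq_lintegral_ofReal]
  · exact Integrable.of_integral_ne_zero (by rw [hint]; positivity)
  · filter_upwards [ae_restrict_mem measurableSet_Ioi] with u (hu : 0 < u)
    positivity

noncomputable def betaDensity (a b x : ℝ) : ℝ :=
  Gamma (a + b) / (Gamma a * Gamma b) * x ^ (a - 1) * (1 - x) ^ (b - 1)

lemma betaMeasure_eq_withDensity (a b : ℝ) :
    _root_.betaMeasure a b =
      (volume.restrict (Ioo 0 1)).withDensity (fun x => ENNReal.ofReal (betaDensity a b x)) :=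
  rfl

instance (a b : ℝ) : SFinite (_root_.betaMeasure a b) := by
  rw [betaMeasure_eq_withDensity]
  infer_instance

lemma image_inv_one_add_Ioi : (fun u : ℝ => (1 + u)⁻¹) '' Ioi 0 = Ioo 0 1 := by
  ext t
  constructor
  · rintro ⟨u, hu : 0 < u, rfl⟩
    exact ⟨by positivity, inv_lt_one_of_one_lt₀ (by linarith)⟩
  · rintro ⟨ht0, ht1⟩
    refine ⟨t⁻¹ - 1, sub_pos.2 ((one_lt_inv₀ ht0).2 ht1), ?_⟩
    simp

lemma betaDensity_inv_one_add_mul_gammaPDFReal {a b u y : ℝ} (hab : Gamma (a + b) ≠ 0)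
    (hu : 0 < u) (hy : 0 < y) :
    ((1 + u) ^ 2)⁻¹ * (betaDensity a b (1 + u)⁻¹ * gammaPDFReal (a + b) (1 + u) y) =
      y ^ (a + b - 1) * exp (-y) / (Gamma a * Gamma b) * (u ^ (b - 1) * exp (-(y * u))) := by
  have hw : 0 < 1 + u := by linarith
  have hsub : 1 - (1 + u)⁻¹ = u * (1 + u)⁻¹ := by field_simp; ring
  have hpow : (1 + u) ^ (a + b) = (1 + u) ^ 2 * ((1 + u) ^ (a - 1) * (1 + u) ^ (b - 1)) := by
    rw [← rpow_natCast, ← rpow_add hw, ← rpow_add hw]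
    ring_nf
  rw [betaDensity, gammaPDFReal, if_pos hy.le, hsub, mul_rpow hu.le (inv_nonneg.2 hw.le),
    inv_rpow hw.le, inv_rpow hw.le, hpow,
    show -((1 + u) * y) = -y + -(y * u) by ring, exp_add]
  field_simp

lemma lintegral_gammaPDF_inv_betaMeasure {a b y : ℝ} (ha : 0 < a) (hb : 0 < b) (hy : 0 < y) :
    ∫⁻ t, gammaPDF (a + b) t⁻¹ y ∂(_root_.betaMeasure a b) = gammaPDF a 1 y := by
  have hderiv : ∀ u ∈ Ioi (0 : ℝ),
      HasDerivWithinAt (fun u : ℝ => (1 + u)⁻¹) (-1 / (1 + u) ^ 2) (Ioi 0) u :=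
    fun u (hu : 0 < u) =>
      (((hasDerivAt_id u).const_add 1).inv (by simp only [id]; linarith)).hasDerivWithinAt
  have hinj : InjOn (fun u : ℝ => (1 + u)⁻¹) (Ioi 0) := fun u _ v _ h => by
    simpa using inv_injective h
  have hintegrand : ∀ u ∈ Ioi (0 : ℝ),
      ENNReal.ofReal |-1 / (1 + u) ^ 2| *
          (ENNReal.ofReal (betaDensity a b (1 + u)⁻¹) * gammaPDF (a + b) (1 + u)⁻¹⁻¹ y) =
        ENNReal.ofReal (y ^ (a + b - 1) * exp (-y) / (Gamma a * Gamma b)) *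
          ENNReal.ofReal (u ^ (b - 1) * exp (-(y * u))) := fun u (hu : 0 < u) => by
    rw [abs_div, abs_neg, abs_one, abs_of_pos (by positivity), one_div, inv_inv, gammaPDF,
      ← ENNReal.ofReal_mul' (gammaPDFReal_nonneg (by linarith) (by linarith) y),
      ← ENNReal.ofReal_mul (by positivity), ← ENNReal.ofReal_mul (by positivity),
      betaDensity_inv_one_add_mul_gammaPDFReal (Gamma_pos_of_pos (by linarith)).ne' hu hy]
  rw [betaMeasure_eq_withDensity, lintegral_withDensity_eq_lintegral_mul_non_measurable _
      (by unfold betaDensity; fun_prop) (ae_of_all _ fun _ => ENNReal.ofReal_lt_top),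
    ← image_inv_one_add_Ioi,
    lintegral_image_eq_lintegral_abs_deriv_mul measurableSet_Ioi hderiv hinj]
  simp only [Pi.mul_apply]
  rw [setLIntegral_congr_fun measurableSet_Ioi hintegrand,
    lintegral_const_mul' _ _ ENNReal.ofReal_ne_top, lintegral_rpow_mul_exp_neg_mul_Ioi hb hy,
    ← ENNReal.ofReal_mul (by positivity), gammaPDF_of_nonneg hy.le]
  congr 1
  rw [one_rpow, one_mul, div_rpow zero_le_one hy.le, one_rpow, show a + b - 1 = a - 1 + b by ring,
    rpow_add hy]
  field_simp

lemma measurable_gammaPDF_inv_rate (a : ℝ) :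
    Measurable (fun p : ℝ × ℝ => gammaPDF a p.1⁻¹ p.2) :=
  ENNReal.measurable_ofReal.comp <|
    Measurable.ite (measurableSet_le measurable_const measurable_snd) (by fun_prop) measurable_const

lemma betaMeasure_mconv_gammaMeasure {a b : ℝ} (ha : 0 < a) (hb : 0 < b) :
    _root_.betaMeasure a b ∗ₘ gammaMeasure (a + b) 1 = gammaMeasure a 1 := by
  ext s hs
  have hsection : ∀ᵐ t ∂(_root_.betaMeasure a b),
      gammaMeasure (a + b) 1 ((t * ·) ⁻¹' s) = ∫⁻ y in s, gammaPDF (a + b) t⁻¹ y := by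
    rw [betaMeasure_eq_withDensity]
    filter_upwards [withDensity_absolutelyContinuous _ _ (ae_restrict_mem measurableSet_Ioo)]
      with t ht
    rw [← Measure.map_apply (measurable_const_mul t) hs,
      gammaMeasure_map_const_mul zero_le_one ht.1, gammaMeasure, withDensity_apply _ hs, one_div]
  have hmixture : ∀ᵐ y ∂volume.restrict s,
      ∫⁻ t, gammaPDF (a + b) t⁻¹ y ∂(_root_.betaMeasure a b) = gammaPDF a 1 y := by
    refine ae_restrict_of_ae ?_
    filter_upwards [compl_mem_ae_iff.2 (measure_singleton (0 : ℝ))] with y (hy : y ≠ 0)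
    rcases hy.lt_or_gt with hy | hy
    · simp [gammaPDF_of_neg hy]
    · exact lintegral_gammaPDF_inv_betaMeasure ha hb hy
  calc (_root_.betaMeasure a b ∗ₘ gammaMeasure (a + b) 1) s
      = ∫⁻ t, gammaMeasure (a + b) 1 ((t * ·) ⁻¹' s) ∂(_root_.betaMeasure a b) := by
        rw [Measure.mconv, Measure.map_apply measurable_mul hs,
          Measure.prod_apply (measurable_mul hs)]
        rfl
    _ = ∫⁻ t, (∫⁻ y in s, gammaPDF (a + b) t⁻¹ y) ∂(_root_.betaMeasure a b) :=
        lintegral_congr_ae hsection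
    _ = ∫⁻ y in s, ∫⁻ t, gammaPDF (a + b) t⁻¹ y ∂(_root_.betaMeasure a b) :=
        lintegral_lintegral_swap (measurable_gammaPDF_inv_rate (a + b)).aemeasurable
    _ = ∫⁻ y in s, gammaPDF a 1 y := lintegral_congr_ae hmixture
    _ = gammaMeasure a 1 s := (withDensity_apply _ hs).symm

/-- Beta-gamma algebra: if `X ~ Gamma(M, 1)` and `X_beta` is an independent
Beta(M-N+1, N-1) random variable, then `X_beta * X ~ Gamma(M-N+1, 1)`. -/
theorem beta_mul_gamma
    {Ω : Type*} [MeasurableSpace Ω] (μ : Measure Ω) [IsProbabilityMeasure μ]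
    (M N : ℕ) (hN : 1 < N) (hNM : N < M)
    (X Xb : Ω → ℝ) (hX : Measurable X) (hXb : Measurable Xb)
    (hXlaw : Measure.map X μ = gammaMeasure (M : ℝ) 1)
    (hXblaw : Measure.map Xb μ = _root_.betaMeasure ((M : ℝ) - N + 1) ((N : ℝ) - 1))
    (hindep : IndepFun Xb X μ) :
    Measure.map (fun ω => Xb ω * X ω) μ = gammaMeasure ((M : ℝ) - N + 1) 1 := by
  have hN' : (1 : ℝ) < N := by exact_mod_cast hN
  have hNM' : (N : ℝ) < M := by exact_mod_cast hNM
  have hM : gammaMeasure (M : ℝ) 1 = gammaMeasure (((M : ℝ) - N + 1) + ((N : ℝ) - 1)) 1 := by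
    ring_nf
  rw [show (fun ω => Xb ω * X ω) = Xb * X from rfl, hindep.map_mul_eq_map_mconv_map hXb hX,
    hXblaw, hXlaw, hM]
  exact betaMeasure_mconv_gammaMeasure (by linarith) (by linarith)
end

section
/- Let h_eff be a random unit vector in C^M and let v be a unit vector that is isotropically distributed in the (M-1)-dimensional orthogonal complement of an independent quantization vector h_hat, where theta = angle(h_eff, h_hat). Then E[|h_eff^H v|^2] = E[sin^2(theta)] / (M-1). -/
/-!
Write `h_effᴴ v = ∑ⱼ aⱼ zⱼ` with `a = h_effᴴ T`. Since `z` is isotropic, `E[z zᴴ] = I / (M - 1)`: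
coordinate swaps are unitary, so all `E|zⱼ|²` agree and sum to `1`, and flipping the sign of one
coordinate kills the off-diagonal moments. By independence, `E|h_effᴴ v|² = E‖a‖² / (M - 1)`.
Finally `[T | h_hat]` is a square matrix with orthonormal columns, hence unitary, so
`T Tᴴ + h_hat h_hatᴴ = I` and `‖a‖² = 1 - |h_effᴴ h_hat|²`.
-/

open MeasureTheory ProbabilityTheory Matrix

noncomputable instance matrixMeasurableSpace (m n : Type*) : MeasurableSpace (Matrix m n ℂ) :=
  MeasurableSpace.pi

open scoped ComplexConjugate

theorem ofReal_sum_normSq_eq_star_dotProduct {ι : Type*} [Fintype ι] (x : ι → ℂ) :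
    ((∑ i, Complex.normSq (x i) : ℝ) : ℂ) = star x ⬝ᵥ x := by
  simp [dotProduct, Complex.normSq_eq_conj_mul_self]

theorem mul_conjTranspose_add_vecMulVec_eq_one {m n : Type*} [Fintype m] [Fintype n]
    [DecidableEq m] [DecidableEq n] {T : Matrix m n ℂ} {h : m → ℂ}
    (hT : Tᴴ * T = 1) (hTh : Tᴴ *ᵥ h = 0) (hh : star h ⬝ᵥ h = 1)
    (hcard : Fintype.card m = Fintype.card n + 1) :
    T * Tᴴ + vecMulVec h (star h) = 1 := by
  have hhT : star h ᵥ* T = 0 := by simpa [star_mulVec] using congrArg star hTh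
  have hU : (fromCols T (replicateCol Unit h))ᴴ * fromCols T (replicateCol Unit h) = 1 := by
    rw [conjTranspose_fromCols_eq_fromRows_conjTranspose, fromRows_mul_fromCols, hT,
      conjTranspose_replicateCol, ← replicateCol_mulVec, ← replicateRow_vecMul,
      replicateRow_mul_replicateCol, hTh, hhT, hh, replicateCol_zero, replicateRow_zero,
      ← fromBlocks_one]
    congr
  have e : m ≃ n ⊕ Unit := Fintype.equivOfCardEq (by simp [hcard])
  rwa [conjTranspose_fromCols_eq_fromRows_conjTranspose,
    ← fromCols_mul_fromRows_eq_one_comm e, fromCols_mul_fromRows,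
    conjTranspose_replicateCol, ← vecMulVec_eq] at hU

theorem sum_normSq_vecMul_add_normSq_dotProduct {m n : Type*} [Fintype m] [Fintype n]
    [DecidableEq m] {T : Matrix m n ℂ} {h : m → ℂ}
    (hTh : T * Tᴴ + vecMulVec h (star h) = 1) (x : m → ℂ) :
    ∑ j, Complex.normSq ((star x ᵥ* T) j) + Complex.normSq (star x ⬝ᵥ h) =
      ∑ i, Complex.normSq (x i) := by
  apply Complex.ofReal_injective
  simp only [Complex.ofReal_add, Complex.ofReal_sum, ← Complex.mul_conj]
  calc ∑ j, (star x ᵥ* T) j * conj ((star x ᵥ* T) j) + star x ⬝ᵥ h * conj (star x ⬝ᵥ h)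
      = star x ⬝ᵥ ((T * Tᴴ + vecMulVec h (star h)) *ᵥ x) := by
        rw [add_mulVec, dotProduct_add, ← mulVec_mulVec, dotProduct_mulVec, vecMulVec_mulVec,
          dotProduct_smul, op_smul_eq_mul, star_dotProduct h x,
          show Tᴴ *ᵥ x = star (star x ᵥ* T) by rw [star_vecMul, star_star]]
        rfl
    _ = ∑ i, x i * conj (x i) := by
        rw [hTh, one_mulVec]
        simp [dotProduct, mul_comm]

theorem measurable_star_vecMul {m n : Type*} [Fintype m] :
    Measurable fun p : (m → ℂ) × Matrix m n ℂ => star p.1 ᵥ* p.2 := by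
  refine measurable_pi_lambda _ fun j => ?_
  have hentry (i : m) : Measurable fun A : Matrix m n ℂ => A i j :=
    (measurable_pi_apply j).comp (measurable_pi_apply i)
  simp only [vecMul, dotProduct]
  fun_prop

theorem norm_le_one_of_sum_normSq_le_one {ι : Type*} [Fintype ι] {x : ι → ℂ}
    (hx : ∑ i, Complex.normSq (x i) ≤ 1) (i : ι) : ‖x i‖ ≤ 1 := by
  have hi : Complex.normSq (x i) ≤ 1 :=
    (Finset.single_le_sum (fun j _ => Complex.normSq_nonneg (x j)) (Finset.mem_univ i)).trans hx
  rw [Complex.normSq_eq_norm_sq] at hi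
  exact (pow_le_one_iff_of_nonneg (norm_nonneg _) two_ne_zero).mp hi

theorem normSq_dotProduct_eq_sum {ι : Type*} [Fintype ι] (a z : ι → ℂ) :
    (Complex.normSq (a ⬝ᵥ z) : ℂ) = ∑ j, ∑ k, a j * conj (a k) * (z j * conj (z k)) := by
  rw [← Complex.mul_conj, dotProduct, map_sum, Finset.sum_mul_sum]
  simp only [map_mul]
  exact Finset.sum_congr rfl fun j _ => Finset.sum_congr rfl fun k _ => by ring

section Isotropic

variable {Ω ι : Type*} [MeasurableSpace Ω] {μ : Measure Ω} [Fintype ι] [DecidableEq ι]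

def IsUnitarilyInvariant (μ : Measure Ω) (z : Ω → ι → ℂ) : Prop :=
  ∀ U ∈ unitaryGroup ι ℂ, μ.map (fun ω => U *ᵥ z ω) = μ.map z

theorem permMatrix_mem_unitaryGroup (σ : Equiv.Perm ι) : σ.permMatrix ℂ ∈ unitaryGroup ι ℂ := by
  rw [mem_unitaryGroup_iff, star_eq_conjTranspose, conjTranspose_permMatrix, ← permMatrix_mul,
    inv_mul_cancel, permMatrix_one]

theorem diagonal_mem_unitaryGroup {d : ι → ℂ} (hd : d * star d = 1) :
    diagonal d ∈ unitaryGroup ι ℂ := by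
  rw [mem_unitaryGroup_iff, star_eq_conjTranspose, diagonal_conjTranspose, diagonal_mul_diagonal]
  exact (congrArg diagonal hd).trans diagonal_one

variable {z : Ω → ι → ℂ}

theorem IsUnitarilyInvariant.integral_comp_mulVec {E : Type*} [NormedAddCommGroup E]
    [NormedSpace ℝ E] (hiso : IsUnitarilyInvariant μ z) (hz : Measurable z)
    {U : Matrix ι ι ℂ} (hU : U ∈ unitaryGroup ι ℂ) {f : (ι → ℂ) → E}
    (hf : AEStronglyMeasurable f (μ.map z)) :
    ∫ ω, f (U *ᵥ z ω) ∂μ = ∫ ω, f (z ω) ∂μ := by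
  rw [← integral_map (by fun_prop) (hiso U hU ▸ hf), hiso U hU, integral_map hz.aemeasurable hf]

theorem IsUnitarilyInvariant.integral_mul_conj_eq_zero (hiso : IsUnitarilyInvariant μ z)
    (hz : Measurable z) {j k : ι} (hjk : j ≠ k) :
    ∫ ω, z ω j * conj (z ω k) ∂μ = 0 := by
  set d : ι → ℂ := fun l => if l = j then -1 else 1
  have hd : d * star d = 1 := by
    ext l
    by_cases hl : l = j <;> simp [d, hl]
  have hflip := hiso.integral_comp_mulVec hz (diagonal_mem_unitaryGroup hd)
    (f := fun y => y j * conj (y k)) (by fun_prop)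
  simp [d, mulVec_diagonal, hjk.symm, integral_neg] at hflip
  linear_combination (-1 / 2 : ℂ) * hflip

variable [IsProbabilityMeasure μ]

theorem IsUnitarilyInvariant.integral_normSq_apply (hiso : IsUnitarilyInvariant μ z)
    (hz : Measurable z) (hz_unit : ∀ ω, ∑ i, Complex.normSq (z ω i) = 1) (j : ι) :
    ∫ ω, Complex.normSq (z ω j) ∂μ = (Fintype.card ι : ℝ)⁻¹ := by
  have hswap (l : ι) : ∫ ω, Complex.normSq (z ω l) ∂μ = ∫ ω, Complex.normSq (z ω j) ∂μ := by
    simpa [permMatrix_mulVec] using hiso.integral_comp_mulVec hz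
      (permMatrix_mem_unitaryGroup (Equiv.swap l j)) (f := fun y => Complex.normSq (y j))
      (Complex.continuous_normSq.comp (continuous_apply j)).aestronglyMeasurable
  have hsum : ∑ l, ∫ ω, Complex.normSq (z ω l) ∂μ = 1 := by
    rw [← integral_finsetSum]
    · simp [hz_unit]
    · intro l _
      refine Integrable.of_bound (by fun_prop) 1 (ae_of_all _ fun ω => ?_)
      simpa [Complex.normSq_eq_norm_sq] using
        pow_le_one₀ (n := 2) (norm_nonneg _) (norm_le_one_of_sum_normSq_le_one (hz_unit ω).le l)
  simp only [hswap, Finset.sum_const, Finset.card_univ, nsmul_eq_mul] at hsum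
  exact eq_inv_of_mul_eq_one_right hsum

theorem IsUnitarilyInvariant.integral_mul_conj (hiso : IsUnitarilyInvariant μ z)
    (hz : Measurable z) (hz_unit : ∀ ω, ∑ i, Complex.normSq (z ω i) = 1) (j k : ι) :
    ∫ ω, z ω j * conj (z ω k) ∂μ = if j = k then (Fintype.card ι : ℂ)⁻¹ else 0 := by
  split_ifs with hjk
  · subst hjk
    simp_rw [Complex.mul_conj]
    rw [integral_complex_ofReal, hiso.integral_normSq_apply hz hz_unit]
    push_cast
    rfl
  · exact hiso.integral_mul_conj_eq_zero hz hjk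

theorem IsUnitarilyInvariant.integral_normSq_dotProduct {a : Ω → ι → ℂ}
    (hiso : IsUnitarilyInvariant μ z) (hz : Measurable z)
    (hz_unit : ∀ ω, ∑ i, Complex.normSq (z ω i) = 1) (ha : Measurable a)
    (ha2 : ∀ j, MemLp (fun ω => a ω j) 2 μ) (hindep : IndepFun a z μ) :
    ∫ ω, Complex.normSq (a ω ⬝ᵥ z ω) ∂μ =
      (∫ ω, ∑ j, Complex.normSq (a ω j) ∂μ) / Fintype.card ι := by
  have hprod (j k : ι) : ∫ ω, a ω j * conj (a ω k) * (z ω j * conj (z ω k)) ∂μ =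
      (∫ ω, a ω j * conj (a ω k) ∂μ) * ∫ ω, z ω j * conj (z ω k) ∂μ :=
    hindep.integral_fun_comp_mul_comp (f := fun x => x j * conj (x k))
      (g := fun y => y j * conj (y k)) ha.aemeasurable hz.aemeasurable (by fun_prop) (by fun_prop)
  have hint (j k : ι) :
      Integrable (fun ω => a ω j * conj (a ω k) * (z ω j * conj (z ω k))) μ := by
    refine ((ha2 j).integrable_mul (ha2 k).star).mul_bdd (c := 1) (by fun_prop)
      (ae_of_all _ fun ω => ?_)
    have hz1 := norm_le_one_of_sum_normSq_le_one (hz_unit ω).le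
    rw [norm_mul, Complex.norm_conj]
    exact mul_le_one₀ (hz1 j) (norm_nonneg _) (hz1 k)
  apply Complex.ofReal_injective
  calc ((∫ ω, Complex.normSq (a ω ⬝ᵥ z ω) ∂μ : ℝ) : ℂ)
      = ∑ j, ∑ k, ∫ ω, a ω j * conj (a ω k) * (z ω j * conj (z ω k)) ∂μ := by
        rw [← integral_complex_ofReal]
        simp_rw [normSq_dotProduct_eq_sum]
        rw [integral_finsetSum _ fun j _ => integrable_finsetSum _ fun k _ => hint j k]
        exact Finset.sum_congr rfl fun j _ => integral_finsetSum _ fun k _ => hint j k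
    _ = (∑ j, ∫ ω, a ω j * conj (a ω j) ∂μ) * (Fintype.card ι : ℂ)⁻¹ := by
        simp [hprod, hiso.integral_mul_conj hz hz_unit, Finset.sum_mul]
    _ = (((∫ ω, ∑ j, Complex.normSq (a ω j) ∂μ) / Fintype.card ι : ℝ) : ℂ) := by
        have hsq (j : ι) : Integrable (fun ω => a ω j * conj (a ω j)) μ :=
          (ha2 j).integrable_mul (ha2 j).star
        rw [← integral_finsetSum _ fun j _ => hsq j]
        simp_rw [Complex.mul_conj, ← Complex.ofReal_sum, integral_complex_ofReal]
        push_cast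
        rfl

end Isotropic

theorem expectation_interference_orthogonal_isotropic_general
    {Ω : Type*} [MeasurableSpace Ω] (μ : Measure Ω) [IsProbabilityMeasure μ]
    (M : ℕ) (hM : 2 ≤ M)
    (heff hhat : Ω → (Fin M → ℂ)) (hheff : Measurable heff)
    (heff_unit : ∀ ω, ∑ i, Complex.normSq (heff ω i) = 1)
    (hhat_unit : ∀ ω, ∑ i, Complex.normSq (hhat ω i) = 1)
    (T : Ω → Matrix (Fin M) (Fin (M - 1)) ℂ) (hT : Measurable T)
    (hT_orth : ∀ ω, (T ω)ᴴ * T ω = 1)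
    (hT_perp : ∀ ω, Matrix.mulVec (T ω)ᴴ (hhat ω) = 0)
    (z : Ω → (Fin (M - 1) → ℂ)) (hz : Measurable z)
    (hz_unit : ∀ ω, ∑ j, Complex.normSq (z ω j) = 1)
    (hz_iso : ∀ U ∈ Matrix.unitaryGroup (Fin (M - 1)) ℂ,
      Measure.map (fun ω => Matrix.mulVec U (z ω)) μ = Measure.map z μ)
    (hz_indep : IndepFun z (fun ω => (heff ω, hhat ω, T ω)) μ)
    (v : Ω → (Fin M → ℂ)) (hv : ∀ ω, v ω = Matrix.mulVec (T ω) (z ω)) :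
    ∫ ω, Complex.normSq (∑ i, (starRingEnd ℂ) (heff ω i) * v ω i) ∂μ =
      (∫ ω, (1 - Complex.normSq (∑ i, (starRingEnd ℂ) (heff ω i) * hhat ω i)) ∂μ) / (M - 1) := by
  set a : Ω → Fin (M - 1) → ℂ := fun ω => star (heff ω) ᵥ* T ω
  have hcompl (ω : Ω) : T ω * (T ω)ᴴ + vecMulVec (hhat ω) (star (hhat ω)) = 1 :=
    mul_conjTranspose_add_vecMulVec_eq_one (hT_orth ω) (hT_perp ω)
      (by rw [← ofReal_sum_normSq_eq_star_dotProduct, hhat_unit ω, Complex.ofReal_one])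
      (by simp; omega)
  have ha_sq (ω : Ω) : ∑ j, Complex.normSq (a ω j) =
      1 - Complex.normSq (∑ i, (starRingEnd ℂ) (heff ω i) * hhat ω i) := by
    rw [← heff_unit ω, ← sum_normSq_vecMul_add_normSq_dotProduct (hcompl ω) (heff ω)]
    exact (add_sub_cancel_right _ _).symm
  have ha : Measurable a := measurable_star_vecMul.comp (hheff.prodMk hT)
  have ha2 (j : Fin (M - 1)) : MemLp (fun ω => a ω j) 2 μ := by
    refine MemLp.of_bound ((measurable_pi_apply j).comp ha).aestronglyMeasurable 1
      (ae_of_all _ fun ω => norm_le_one_of_sum_normSq_le_one ?_ j)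
    rw [ha_sq]
    linarith [Complex.normSq_nonneg (∑ i, (starRingEnd ℂ) (heff ω i) * hhat ω i)]
  have hindep : IndepFun a z μ :=
    (hz_indep.comp measurable_id
      (measurable_star_vecMul.comp (measurable_fst.prodMk measurable_snd.snd))).symm
  calc ∫ ω, Complex.normSq (∑ i, (starRingEnd ℂ) (heff ω i) * v ω i) ∂μ
      = ∫ ω, Complex.normSq (a ω ⬝ᵥ z ω) ∂μ := by
        simp_rw [hv, a, ← dotProduct_mulVec]
        rfl
    _ = (∫ ω, ∑ j, Complex.normSq (a ω j) ∂μ) / Fintype.card (Fin (M - 1)) :=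
        IsUnitarilyInvariant.integral_normSq_dotProduct hz_iso hz hz_unit ha ha2 hindep
    _ = _ := by
        simp_rw [ha_sq, Fintype.card_fin]
        rw [Nat.cast_sub (by omega), Nat.cast_one]

/-- Let `h_eff` be a random unit vector in `ℂ^M` and let `v` be a unit vector isotropically
distributed in the `(M-1)`-dimensional orthogonal complement of an independent quantization
vector `h_hat` (encoded as `v = T z`, where the columns of `T` form an orthonormal basis of
the orthogonal complement of `h_hat` and `z` is an isotropic unit vector of `ℂ^{M-1}`
independent of `(h_eff, h_hat, T)`).  Then
`E[|h_effᴴ v|²] = E[sin²(∠(h_eff, h_hat))] / (M-1)`, where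
`sin²(∠(h_eff, h_hat)) = 1 - |h_effᴴ h_hat|²`. -/
theorem expectation_interference_orthogonal_isotropic
    {Ω : Type*} [MeasurableSpace Ω] (μ : Measure Ω) [IsProbabilityMeasure μ]
    (M : ℕ) (hM : 2 ≤ M)
    (heff hhat : Ω → (Fin M → ℂ)) (hheff : Measurable heff) (hhhat : Measurable hhat)
    (heff_unit : ∀ ω, ∑ i, Complex.normSq (heff ω i) = 1)
    (hhat_unit : ∀ ω, ∑ i, Complex.normSq (hhat ω i) = 1)
    (T : Ω → Matrix (Fin M) (Fin (M - 1)) ℂ) (hT : Measurable T)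
    (hT_orth : ∀ ω, (T ω)ᴴ * T ω = 1)
    (hT_perp : ∀ ω, Matrix.mulVec (T ω)ᴴ (hhat ω) = 0)
    (z : Ω → (Fin (M - 1) → ℂ)) (hz : Measurable z)
    (hz_unit : ∀ ω, ∑ j, Complex.normSq (z ω j) = 1)
    (hz_iso : ∀ U ∈ Matrix.unitaryGroup (Fin (M - 1)) ℂ,
      Measure.map (fun ω => Matrix.mulVec U (z ω)) μ = Measure.map z μ)
    (hz_indep : IndepFun z (fun ω => (heff ω, hhat ω, T ω)) μ)
    (v : Ω → (Fin M → ℂ)) (hv : ∀ ω, v ω = Matrix.mulVec (T ω) (z ω)) :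
    ∫ ω, Complex.normSq (∑ i, (starRingEnd ℂ) (heff ω i) * v ω i) ∂μ =
      (∫ ω, (1 - Complex.normSq (∑ i, (starRingEnd ℂ) (heff ω i) * hhat ω i)) ∂μ) / (M - 1) :=
  expectation_interference_orthogonal_isotropic_general μ M hM heff hhat hheff heff_unit hhat_unit T
    hT hT_orth hT_perp z hz hz_unit hz_iso hz_indep v hv
end

section
/- (Rate gap bound, Theorem 1) In an M-antenna zero-forcing broadcast system with quantization-based combining over N-antenna receivers, the per-user rate gap satisfies Delta R(P) <= (sum_{l=M-N+1}^{M-1} 1/l) log2(e) + log2(1 + P * ((M-N+1)/M) * E[sin^2(angle(h_hat, h_eff))]). Abstractly: if S ~ Gamma(M,1), T ~ Gamma(M-N+1,1) coupled as T = X_beta * S with X_beta ~ Beta(M-N+1,N-1) independent of S, G uniform on [0,1]-type direction gains with E[G] = 1/M, and I is nonnegative interference with E[I] <= rho (M-N+1) E[sin^2], then E[log2(1 + rho S G)] - E[log2((1 + rho T G + I')/(1+I'))] is bounded by the stated quantity, via -E[log2 X_beta] = log2(e) sum_{l=M-N+1}^{M-1} 1/l and Jensen's inequality. -/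
open MeasureTheory ProbabilityTheory

/-!
Write `T = X S` with `X ~ Beta(M-N+1, N-1)`, which lives on `(0,1)`. Pointwise
`(1 + ρSG) X ≤ 1 + ρTG ≤ (1 + ρTG/(1+I)) (1+I)`, so the rate gap is at most
`E[log₂(1+I)] - E[log₂ X]`. Jensen bounds the first term by `log₂(1 + E[I])`, and the log-moment
`-E[ln X] = ∑_{l=M-N+1}^{M-1} 1/l` of the Beta law follows from the recursion
`(1-x)^(m+1) = (1-x)^m - x (1-x)^m` in `∫₀¹ xⁿ (1-x)ᵐ log x dx`.
-/

open Real Set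
open scoped Nat

lemma integrableOn_pow_mul_one_sub_pow_mul_log (n m : ℕ) :
    IntegrableOn (fun x : ℝ => x ^ n * (1 - x) ^ m * log x) (Ioc 0 1) := by
  refine Integrable.mono
    (intervalIntegral.intervalIntegrable_log' (a := 0) (b := 1)).1 (by fun_prop) ?_
  refine (ae_restrict_iff' measurableSet_Ioc).2 (.of_forall fun x hx => ?_)
  have hx' : 0 ≤ 1 - x := by linarith [hx.2]
  rw [norm_mul, norm_mul]
  refine mul_le_of_le_one_left (norm_nonneg _) (mul_le_one₀ ?_ (norm_nonneg _) ?_)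
  · simpa [abs_of_nonneg hx.1.le] using pow_le_one₀ hx.1.le hx.2
  · simpa [abs_of_nonneg hx'] using pow_le_one₀ hx' (by linarith [hx.1])

lemma integral_Ioo_pow_mul_log (n : ℕ) :
    ∫ x in Ioo (0:ℝ) 1, x ^ n * log x = -1 / ((n:ℝ) + 1) ^ 2 := by
  set F : ℝ → ℝ := fun x => x ^ (n + 1) * log x / (n + 1) - x ^ (n + 1) / ((n:ℝ) + 1) ^ 2
  have hF : ContinuousOn F (Icc 0 1) := by
    have h : Continuous fun x : ℝ => x ^ (n + 1) * log x :=
      ((continuous_pow n).mul continuous_mul_log).congr fun x => by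
        simp only [Pi.mul_apply]; ring
    exact ((h.div_const _).sub ((continuous_pow _).div_const _)).continuousOn
  have hF' : ∀ x ∈ Ioo (0:ℝ) 1, HasDerivAt F (x ^ n * log x) x := by
    intro x hx
    refine (((hasDerivAt_pow (n + 1) x).mul (hasDerivAt_log hx.1.ne')).div_const
      ((n:ℝ) + 1)).sub ((hasDerivAt_pow (n + 1) x).div_const (((n:ℝ) + 1) ^ 2)) |>.congr_deriv ?_
    have hx0 : x ≠ 0 := hx.1.ne'
    rw [Nat.add_sub_cancel, pow_succ]
    field_simp
    push_cast
    ring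
  have hint : IntervalIntegrable (fun x : ℝ => x ^ n * log x) volume 0 1 :=
    (intervalIntegrable_iff_integrableOn_Ioc_of_le zero_le_one).2 (by
      simpa using integrableOn_pow_mul_one_sub_pow_mul_log n 0)
  have h := intervalIntegral.integral_eq_sub_of_hasDerivAt_of_le zero_le_one hF hF' hint
  rw [intervalIntegral.integral_of_le zero_le_one, integral_Ioc_eq_integral_Ioo] at h
  rw [h]
  norm_num [F, neg_div]

lemma integral_Ioo_pow_mul_one_sub_pow_mul_log (n m : ℕ) :
    ∫ x in Ioo (0:ℝ) 1, x ^ n * (1 - x) ^ m * log x =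
      -((n ! * m ! : ℝ) / (n + m + 1)!) * ∑ l ∈ Finset.Icc (n + 1) (n + m + 1), (1:ℝ) / l := by
  induction m generalizing n with
  | zero =>
    have hn : (n:ℝ) + 1 ≠ 0 := by positivity
    simp only [pow_zero, mul_one, add_zero, Nat.factorial_zero, Nat.cast_one, Finset.Icc_self,
      Finset.sum_singleton, integral_Ioo_pow_mul_log, Nat.factorial_succ]
    push_cast
    field_simp
  | succ m ih =>
    have hint (k : ℕ) :=
      (integrableOn_pow_mul_one_sub_pow_mul_log k m).mono_set Ioo_subset_Ioc_self
    have hsplit : ∫ x in Ioo (0:ℝ) 1, x ^ n * (1 - x) ^ (m + 1) * log x =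
        (∫ x in Ioo (0:ℝ) 1, x ^ n * (1 - x) ^ m * log x) -
          ∫ x in Ioo (0:ℝ) 1, x ^ (n + 1) * (1 - x) ^ m * log x := by
      rw [← integral_sub (hint n) (hint (n + 1))]
      congr 1 with x
      ring
    have htop : ∑ l ∈ Finset.Icc (n + 1) (n + m + 2), (1:ℝ) / l =
        ∑ l ∈ Finset.Icc (n + 1) (n + m + 1), (1:ℝ) / l + 1 / ((n + m + 2 : ℕ) : ℝ) :=
      Finset.sum_Icc_succ_top (by omega) _
    have hbot : ∑ l ∈ Finset.Icc (n + 1) (n + m + 2), (1:ℝ) / l =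
        1 / ((n + 1 : ℕ) : ℝ) + ∑ l ∈ Finset.Icc (n + 2) (n + m + 2), (1:ℝ) / l := by
      rw [← Finset.add_sum_Ioc_eq_sum_Icc (by omega), ← Finset.Icc_add_one_left_eq_Ioc]; rfl
    rw [hsplit, ih n, ih (n + 1), show n + (m + 1) + 1 = n + m + 2 by ring,
      show n + 1 + m + 1 = n + m + 2 by ring, show n + 1 + 1 = n + 2 by ring]
    rw [htop] at hbot
    rw [htop, eq_sub_of_add_eq' hbot.symm]
    simp only [Nat.factorial_succ, show n + m + 2 = (n + m + 1) + 1 by ring]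
    push_cast
    field_simp
    ring

lemma betaMeasure_eq_zero_of_Gamma_mul_eq_zero {a b : ℝ} (h : Gamma a * Gamma b = 0) :
    _root_.betaMeasure a b = 0 := by
  simp [_root_.betaMeasure, h]

lemma ae_betaMeasure_mem_Ioo (a b : ℝ) : ∀ᵐ x ∂(_root_.betaMeasure a b), x ∈ Ioo (0:ℝ) 1 :=
  (withDensity_absolutelyContinuous _ _).ae_le (ae_restrict_mem measurableSet_Ioo)

lemma betaMeasure_natCast_add_one (n m : ℕ) :
    _root_.betaMeasure (n + 1) (m + 1) = (volume.restrict (Ioo (0:ℝ) 1)).withDensity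
      fun x => ENNReal.ofReal ((n + m + 1)! / (n ! * m !) * x ^ n * (1 - x) ^ m) := by
  have hsum : (n + 1 : ℝ) + (m + 1) = ((n + m + 1 : ℕ) : ℝ) + 1 := by push_cast; ring
  simp only [_root_.betaMeasure, hsum, Gamma_nat_eq_factorial, add_sub_cancel_right,
    rpow_natCast]

lemma integral_log_betaMeasure_natCast_add_one (n m : ℕ) :
    ∫ x, log x ∂(_root_.betaMeasure (n + 1) (m + 1)) =
      -∑ l ∈ Finset.Icc (n + 1) (n + m + 1), (1:ℝ) / l := by
  rw [betaMeasure_natCast_add_one, integral_withDensity_eq_integral_toReal_smul (by fun_prop)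
    (.of_forall fun _ => ENNReal.ofReal_lt_top)]
  have hdens : ∀ x ∈ Ioo (0:ℝ) 1,
      (ENNReal.ofReal ((n + m + 1)! / (n ! * m !) * x ^ n * (1 - x) ^ m)).toReal • log x =
        (n + m + 1)! / (n ! * m !) * (x ^ n * (1 - x) ^ m * log x) := by
    intro x hx
    have : 0 ≤ 1 - x := by linarith [hx.2]
    rw [ENNReal.toReal_ofReal (by have := hx.1.le; positivity), smul_eq_mul]
    ring
  rw [setIntegral_congr_fun measurableSet_Ioo hdens, integral_const_mul,
    integral_Ioo_pow_mul_one_sub_pow_mul_log]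
  field_simp

lemma integral_log_betaMeasure_natCast_sub (M N : ℕ)
    [IsProbabilityMeasure (_root_.betaMeasure ((M:ℝ) - N + 1) ((N:ℝ) - 1))] :
    ∫ x, log x ∂(_root_.betaMeasure ((M:ℝ) - N + 1) ((N:ℝ) - 1)) =
      -∑ l ∈ Finset.Icc (M - N + 1) (M - 1), (1:ℝ) / l := by
  by_cases h : 2 ≤ N ∧ N ≤ M
  · obtain ⟨m, rfl⟩ : ∃ m, N = m + 2 := ⟨N - 2, by omega⟩
    obtain ⟨n, rfl⟩ : ∃ n, M = n + m + 2 := ⟨M - m - 2, by omega⟩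
    have ha : ((n + m + 2 : ℕ) : ℝ) - (m + 2 : ℕ) + 1 = n + 1 := by push_cast; ring
    have hb : ((m + 2 : ℕ) : ℝ) - 1 = m + 1 := by push_cast; ring
    rw [ha, hb, integral_log_betaMeasure_natCast_add_one, show n + m + 2 - (m + 2) = n by omega,
      show n + m + 2 - 1 = n + m + 1 by omega]
  · -- A nonpositive integer Beta parameter makes `Gamma` vanish, and the density divides by it.
    have hGamma : Gamma ((M:ℝ) - N + 1) * Gamma ((N:ℝ) - 1) = 0 := by
      rcases not_and_or.1 h with hN | hM
      · have : (N:ℝ) - 1 = -((1 - N : ℕ) : ℝ) := by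
          rw [Nat.cast_sub (by omega)]; push_cast; ring
        rw [this, Gamma_neg_nat_eq_zero, mul_zero]
      · have : (M:ℝ) - N + 1 = -((N - M - 1 : ℕ) : ℝ) := by
          rw [Nat.cast_sub (by omega), Nat.cast_sub (by omega)]; push_cast; ring
        rw [this, Gamma_neg_nat_eq_zero, zero_mul]
    have := measure_univ (μ := _root_.betaMeasure ((M:ℝ) - N + 1) ((N:ℝ) - 1))
    simp [betaMeasure_eq_zero_of_Gamma_mul_eq_zero hGamma] at this

lemma logb_one_add_sub_logb_one_add_mul_div_le {b a x I : ℝ} (hb : 1 < b) (ha : 0 ≤ a)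
    (hx : x ∈ Ioc 0 1) (hI : 0 ≤ I) :
    logb b (1 + a) - logb b (1 + x * a / (1 + I)) ≤ logb b (1 + I) - logb b x := by
  have hI1 : 0 < 1 + I := by linarith
  have hxa : 0 ≤ x * a := mul_nonneg hx.1.le ha
  have hshrink : (1 + a) * x ≤ 1 + x * a := by nlinarith [hx.2]
  have hsplit : 1 + x * a ≤ (1 + x * a / (1 + I)) * (1 + I) := by
    rw [add_mul, div_mul_cancel₀ _ hI1.ne']
    nlinarith
  have key : logb b ((1 + a) * x) ≤ logb b ((1 + x * a / (1 + I)) * (1 + I)) :=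
    logb_le_logb_of_le hb (by have := hx.1; positivity) (hshrink.trans hsplit)
  rw [logb_mul (by positivity) hx.1.ne', logb_mul (by positivity) hI1.ne'] at key
  linarith

section Jensen

variable {Ω : Type*} [MeasurableSpace Ω] {μ : Measure Ω} {f : Ω → ℝ}

lemma integrable_log_one_add (hf : Integrable f μ) (hf0 : ∀ ω, 0 ≤ f ω) :
    Integrable (fun ω => log (1 + f ω)) μ := by
  refine hf.mono (hf.aemeasurable.const_add 1).log.aestronglyMeasurable (.of_forall fun ω => ?_)
  have h1 : 0 < 1 + f ω := by linarith [hf0 ω]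
  rw [norm_of_nonneg (log_nonneg (by linarith [hf0 ω])), norm_of_nonneg (hf0 ω)]
  linarith [log_le_sub_one_of_pos h1]

lemma integral_log_one_add_le [IsProbabilityMeasure μ] (hf : Integrable f μ)
    (hf0 : ∀ ω, 0 ≤ f ω) : ∫ ω, log (1 + f ω) ∂μ ≤ log (1 + ∫ ω, f ω ∂μ) := by
  have hconcave : ConcaveOn ℝ (Ici 1) log :=
    strictConcaveOn_log_Ioi.concaveOn.subset (fun _ hx => mem_Ioi.2 (zero_lt_one.trans_le hx))
      (convex_Ici 1)
  have h := hconcave.le_map_integral (f := fun ω => 1 + f ω)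
    (continuousOn_log.mono fun _ hx => by
      simp only [mem_compl_iff, mem_singleton_iff]; linarith [mem_Ici.1 hx])
    isClosed_Ici (.of_forall fun ω => by simp [hf0 ω]) ((integrable_const 1).add hf)
    (integrable_log_one_add hf hf0)
  rwa [integral_add (integrable_const 1) hf, integral_const, probReal_univ, one_smul] at h

lemma integral_logb_one_add_le [IsProbabilityMeasure μ] {b : ℝ} (hb : 1 < b)
    (hf : Integrable f μ) (hf0 : ∀ ω, 0 ≤ f ω) :
    ∫ ω, logb b (1 + f ω) ∂μ ≤ logb b (1 + ∫ ω, f ω ∂μ) := by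
  have hlogb : 0 < log b := log_pos hb
  simp only [logb, integral_div]
  gcongr
  exact integral_log_one_add_le hf hf0

end Jensen

theorem qbc_rate_gap_bound_general
    {Ω : Type*} [MeasurableSpace Ω] (μ : Measure Ω) [IsProbabilityMeasure μ]
    (M N : ℕ)
    (P ρ : ℝ) (hP : 0 < P) (hρ : ρ = P / M)
    (ε : ℝ)
    (S G Xb Intf : Ω → ℝ)
    (hXb : Measurable Xb)
    (hXb_law : Measure.map Xb μ = _root_.betaMeasure ((M : ℝ) - N + 1) ((N : ℝ) - 1))
    (hS_nonneg : ∀ ω, 0 ≤ S ω)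
    (hG_range : ∀ ω, G ω ∈ Set.Icc (0:ℝ) 1)
    (hIntf_nonneg : ∀ ω, 0 ≤ Intf ω)
    (hIntf_int : Integrable Intf μ)
    (hIntf_mean : ∫ ω, Intf ω ∂μ ≤ ρ * ((M : ℝ) - N + 1) * ε)
    (hint₁ : Integrable (fun ω => Real.logb 2 (1 + ρ * S ω * G ω)) μ)
    (hint₂ : Integrable
      (fun ω => Real.logb 2 (1 + ρ * (Xb ω * S ω) * G ω / (1 + Intf ω))) μ)
    (hint₃ : Integrable (fun ω => Real.log (Xb ω)) μ) :
    (∫ ω, Real.logb 2 (1 + ρ * S ω * G ω) ∂μ) -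
        ∫ ω, Real.logb 2 (1 + ρ * (Xb ω * S ω) * G ω / (1 + Intf ω)) ∂μ ≤
      (∑ l ∈ Finset.Icc (M - N + 1) (M - 1), (1 : ℝ) / l) * Real.logb 2 (Real.exp 1) +
        Real.logb 2 (1 + P * (((M : ℝ) - N + 1) / M) * ε) := by
  have hρ0 : 0 ≤ ρ := hρ ▸ by positivity
  have : IsProbabilityMeasure (_root_.betaMeasure ((M : ℝ) - N + 1) ((N : ℝ) - 1)) :=
    hXb_law ▸ Measure.isProbabilityMeasure_map hXb.aemeasurable
  have hpointwise : ∀ᵐ ω ∂μ,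
      logb 2 (1 + ρ * S ω * G ω) - logb 2 (1 + ρ * (Xb ω * S ω) * G ω / (1 + Intf ω)) ≤
        logb 2 (1 + Intf ω) - logb 2 (Xb ω) := by
    filter_upwards [ae_of_ae_map hXb.aemeasurable (hXb_law ▸ ae_betaMeasure_mem_Ioo _ _)]
      with ω hω
    have h := logb_one_add_sub_logb_one_add_mul_div_le one_lt_two
      (mul_nonneg (mul_nonneg hρ0 (hS_nonneg ω)) (hG_range ω).1) (Ioo_subset_Ioc_self hω)
      (hIntf_nonneg ω)
    rwa [show Xb ω * (ρ * S ω * G ω) = ρ * (Xb ω * S ω) * G ω by ring] at h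
  have hXb_log : ∫ ω, logb 2 (Xb ω) ∂μ =
      -(∑ l ∈ Finset.Icc (M - N + 1) (M - 1), (1 : ℝ) / l) * logb 2 (exp 1) := by
    simp only [logb, integral_div, log_exp]
    rw [← integral_map hXb.aemeasurable measurable_log.aestronglyMeasurable, hXb_law,
      integral_log_betaMeasure_natCast_sub]
    ring
  have hIntf_log : ∫ ω, logb 2 (1 + Intf ω) ∂μ ≤
      logb 2 (1 + P * (((M : ℝ) - N + 1) / M) * ε) := by
    have hpos : 0 < 1 + ∫ ω, Intf ω ∂μ := by
      have : 0 ≤ ∫ ω, Intf ω ∂μ := integral_nonneg hIntf_nonneg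
      linarith
    refine (integral_logb_one_add_le one_lt_two hIntf_int hIntf_nonneg).trans
      (logb_le_logb_of_le one_lt_two hpos ?_)
    rw [hρ] at hIntf_mean
    linarith [show P / M * (M - N + 1) * ε = P * ((M - N + 1) / M) * ε by ring]
  have hint_Intf : Integrable (fun ω => logb 2 (1 + Intf ω)) μ :=
    (integrable_log_one_add hIntf_int hIntf_nonneg).div_const _
  have hint_Xb : Integrable (fun ω => logb 2 (Xb ω)) μ := hint₃.div_const _
  calc (∫ ω, logb 2 (1 + ρ * S ω * G ω) ∂μ) -
        ∫ ω, logb 2 (1 + ρ * (Xb ω * S ω) * G ω / (1 + Intf ω)) ∂μ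
      = ∫ ω, (logb 2 (1 + ρ * S ω * G ω) -
          logb 2 (1 + ρ * (Xb ω * S ω) * G ω / (1 + Intf ω))) ∂μ :=
        (integral_sub hint₁ hint₂).symm
    _ ≤ ∫ ω, (logb 2 (1 + Intf ω) - logb 2 (Xb ω)) ∂μ :=
        integral_mono_ae (hint₁.sub hint₂) (hint_Intf.sub hint_Xb) hpointwise
    _ = (∫ ω, logb 2 (1 + Intf ω) ∂μ) - ∫ ω, logb 2 (Xb ω) ∂μ := integral_sub hint_Intf hint_Xb
    _ ≤ _ := by
        rw [hXb_log]
        linarith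

/-- Rate gap bound (Theorem 1), abstract form.  `S ~ Gamma(M,1)` is the squared channel
norm, `T = X_beta * S` with `X_beta ~ Beta(M-N+1, N-1)` independent of `(S, G)` is the
squared effective-channel norm, `G ∈ [0,1]` is the beamforming direction gain with
`E[G] = 1/M`, and `Intf ≥ 0` is the multiuser interference with
`E[Intf] ≤ ρ (M-N+1) ε`, where `ε = E[sin²(∠(ĥ, h_eff))]` and `ρ = P/M`.  Then the
per-user rate gap satisfies
`ΔR(P) ≤ (∑_{l=M-N+1}^{M-1} 1/l) log₂ e + log₂(1 + P ((M-N+1)/M) ε)`. -/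
theorem qbc_rate_gap_bound
    {Ω : Type*} [MeasurableSpace Ω] (μ : Measure Ω) [IsProbabilityMeasure μ]
    (M N : ℕ) (hN : 1 ≤ N) (hNM : N < M)
    (P ρ : ℝ) (hP : 0 < P) (hρ : ρ = P / M)
    (ε : ℝ) (hε : 0 ≤ ε)
    (S G Xb Intf : Ω → ℝ)
    (hS : Measurable S) (hG : Measurable G) (hXb : Measurable Xb) (hIntf : Measurable Intf)
    (hS_law : Measure.map S μ = gammaMeasure (M : ℝ) 1)
    (hXb_law : Measure.map Xb μ = _root_.betaMeasure ((M : ℝ) - N + 1) ((N : ℝ) - 1))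
    (hXb_indep : IndepFun Xb (fun ω => (S ω, G ω)) μ)
    (hS_nonneg : ∀ ω, 0 ≤ S ω)
    (hG_range : ∀ ω, G ω ∈ Set.Icc (0:ℝ) 1)
    (hG_mean : ∫ ω, G ω ∂μ = 1 / M)
    (hIntf_nonneg : ∀ ω, 0 ≤ Intf ω)
    (hIntf_int : Integrable Intf μ)
    (hIntf_mean : ∫ ω, Intf ω ∂μ ≤ ρ * ((M : ℝ) - N + 1) * ε)
    (hint₁ : Integrable (fun ω => Real.logb 2 (1 + ρ * S ω * G ω)) μ)
    (hint₂ : Integrable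
      (fun ω => Real.logb 2 (1 + ρ * (Xb ω * S ω) * G ω / (1 + Intf ω))) μ)
    (hint₃ : Integrable (fun ω => Real.log (Xb ω)) μ) :
    (∫ ω, Real.logb 2 (1 + ρ * S ω * G ω) ∂μ) -
        ∫ ω, Real.logb 2 (1 + ρ * (Xb ω * S ω) * G ω / (1 + Intf ω)) ∂μ ≤
      (∑ l ∈ Finset.Icc (M - N + 1) (M - 1), (1 : ℝ) / l) * Real.logb 2 (Real.exp 1) +
        Real.logb 2 (1 + P * (((M : ℝ) - N + 1) / M) * ε) :=
  qbc_rate_gap_bound_general μ M N P ρ hP hρ ε S G Xb Intf hXb hXb_law hS_nonneg hG_range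
    hIntf_nonneg hIntf_int hIntf_mean hint₁ hint₂ hint₃
end
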